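/- arXiv:2211.08935 — 2 statements merged into one kernel-verified Lean document; each statement's English description precedes it below -/
import Mathlib

section
/- Two roots in a c-cluster removed and exchanged cannot have equal τ_c-depth: if C' ∪ {α} and C' ∪ {β} are both c-clusters with α ≠ β, then R_c(α) ≠ R_c(β), where R_c(γ) = min{m ≥ 0 : τ_c^{-m}(γ) ∈ -Δ}. -/
/-- A finite crystallographic root system of rank `n`, presented in the root lattice
`ℤ^n` with the simple roots `α_i = e_i` as standard basis vectors. -/
structure CrysRootDatum (n : ℕ) where
  C : Matrix (Fin n) (Fin n) ℤ
  roots : Finset (Fin n → ℤ)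
  diag : ∀ i, C i i = 2
  offdiag : ∀ i j, i ≠ j → C i j ≤ 0
  symmetrizable : ∃ d : Fin n → ℤ, (∀ i, 0 < d i) ∧ ∀ i j, d i * C i j = d j * C j i
  zero_not_mem : (0 : Fin n → ℤ) ∉ roots
  simple_mem : ∀ i, (Pi.single i 1 : Fin n → ℤ) ∈ roots
  sign_coherent : ∀ r ∈ roots, (∀ j, 0 ≤ r j) ∨ (∀ j, r j ≤ 0)
  reflect_mem : ∀ i, ∀ r ∈ roots, (r - (∑ j, C i j * r j) • Pi.single i 1) ∈ roots
  neg_mem : ∀ r ∈ roots, -r ∈ roots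
  reduced : ∀ (c : ℤ) (i : Fin n), c • (Pi.single i 1 : Fin n → ℤ) ∈ roots → c = 1 ∨ c = -1

namespace CrysRootDatum

variable {n : ℕ} (R : CrysRootDatum n)

/-- The simple reflection `s_i` acting on the root lattice. -/
def sref (i : Fin n) (v : Fin n → ℤ) : Fin n → ℤ :=
  v - (∑ j, R.C i j * v j) • Pi.single i 1

/-- `v` is a positive root. -/
def IsPos (v : Fin n → ℤ) : Prop := v ∈ R.roots ∧ ∀ j, 0 ≤ v j

/-- The set `Φ_{≥-1} = Φ⁺ ∪ (-Δ)` of almost positive roots. -/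
def almostPos : Set (Fin n → ℤ) :=
  {v | R.IsPos v ∨ ∃ i, v = -(Pi.single i 1 : Fin n → ℤ)}

open Classical in
/-- The map `σ_i`. -/
noncomputable def sigmaMap (i : Fin n) (v : Fin n → ℤ) : Fin n → ℤ :=
  if (∃ j, v = -(Pi.single j 1 : Fin n → ℤ)) ∧ v ≠ -(Pi.single i 1 : Fin n → ℤ)
  then v else R.sref i v

/-- For the Coxeter element `c = c_1 ⋯ c_n` recorded as `l = [c_1, …, c_n]`, the map
`τ_c = σ_{c_1} ∘ ⋯ ∘ σ_{c_n}`. -/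
noncomputable def tauC (l : List (Fin n)) (v : Fin n → ℤ) : Fin n → ℤ :=
  l.foldr (fun i u => R.sigmaMap i u) v

/-- The inverse map `τ_c⁻¹ = σ_{c_n} ∘ ⋯ ∘ σ_{c_1}` (each `σ_i` is an involution on
the set of almost positive roots). -/
noncomputable def tauCInv (l : List (Fin n)) (v : Fin n → ℤ) : Fin n → ℤ :=
  l.foldl (fun u i => R.sigmaMap i u) v

/-- `R_c(γ) = min { m ≥ 0 : τ_c^{-m}(γ) ∈ -Δ }`. -/
noncomputable def Rdepth (l : List (Fin n)) (γ : Fin n → ℤ) : ℕ :=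
  sInf {m : ℕ | ∃ i, (R.tauCInv l)^[m] γ = -(Pi.single i 1 : Fin n → ℤ)}

end CrysRootDatum

/-! If `R_c(α) = R_c(β) = m`, then `τ_c^{-m}` sends `α` and `β` to distinct negative simple
roots `-α_i` and `-α_j`, which are compatible; by `τ_c`-invariance of the compatibility degree so
are `α` and `β`, and maximality of the cluster `C' ∪ {α}` then forces `β ∈ C' ∪ {α}`. -/

open Function Set Matrix

lemma Set.InjOn.mem_periodicPts {α : Type*} {f : α → α} {s : Set α} (hinj : InjOn f s)
    (hf : MapsTo f s s) (hs : s.Finite) {x : α} (hx : x ∈ s) : x ∈ periodicPts f := by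
  have : Finite s := hs.to_subtype
  obtain ⟨k, hk, hper⟩ :=
    Function.mem_periodicPts.1 ((hf.restrict_inj.2 hinj).mem_periodicPts ⟨x, hx⟩)
  refine mk_mem_periodicPts hk ?_
  simpa [IsPeriodicPt, IsFixedPt, hf.iterate_restrict] using congrArg Subtype.val hper

lemma Finset.sum_range_succ_eq_of_eq {M : Type*} [AddCancelCommMonoid M] (g : ℕ → M) {k : ℕ}
    (h : g k = g 0) : ∑ j ∈ Finset.range k, g (j + 1) = ∑ j ∈ Finset.range k, g j := by
  apply add_right_cancel (b := g 0)
  rw [← Finset.sum_range_succ', Finset.sum_range_succ, h]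

namespace CrysRootDatum

variable {n : ℕ} (R : CrysRootDatum n)

lemma sref_eq (i : Fin n) (v : Fin n → ℤ) :
    R.sref i v = v - (R.C *ᵥ v) i • Pi.single i 1 := rfl

lemma sref_apply_of_ne {i j : Fin n} (h : j ≠ i) (v : Fin n → ℤ) : R.sref i v j = v j := by
  simp [sref_eq, h]

lemma sref_apply_self (i : Fin n) (v : Fin n → ℤ) : R.sref i v i = v i - (R.C *ᵥ v) i := by
  simp [sref_eq]

lemma mulVec_sref (i k : Fin n) (v : Fin n → ℤ) :
    (R.C *ᵥ R.sref k v) i = (R.C *ᵥ v) i - (R.C *ᵥ v) k * R.C i k := by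
  rw [sref_eq, mulVec_sub, mulVec_smul, mulVec_single_one]
  simp [mul_comm]

lemma sref_sref (i : Fin n) (v : Fin n → ℤ) : R.sref i (R.sref i v) = v := by
  rw [sref_eq (v := R.sref i v), mulVec_sref, R.diag, sref_eq]
  ext j
  simp only [Pi.sub_apply, Pi.smul_apply, smul_eq_mul]
  ring

lemma sref_single_self (i : Fin n) : R.sref i (Pi.single i 1) = -Pi.single i 1 := by
  ext j
  by_cases h : j = i
  · subst h; simp [sref_apply_self, R.diag]
  · simp [sref_apply_of_ne _ h, h]

lemma sref_add (i : Fin n) (x y : Fin n → ℤ) : R.sref i (x + y) = R.sref i x + R.sref i y := by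
  simp only [sref_eq, mulVec_add, Pi.add_apply, add_smul]
  abel

lemma sref_neg (i : Fin n) (v : Fin n → ℤ) : R.sref i (-v) = -R.sref i v := by
  simp only [sref_eq, mulVec_neg, Pi.neg_apply, neg_smul]
  abel

lemma sum_sref (k : Fin n) (r : Fin n → ℤ) :
    ∑ j, R.sref k r j = ∑ j, r j - (R.C *ᵥ r) k := by
  simp [sref_eq, Finset.sum_sub_distrib, Pi.single_apply]

lemma IsPos.ne_zero {R : CrysRootDatum n} {r : Fin n → ℤ} (h : R.IsPos r) : r ≠ 0 :=
  fun h0 => R.zero_not_mem (h0 ▸ h.1)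

lemma IsPos.ne_negSingle {R : CrysRootDatum n} {r : Fin n → ℤ} (h : R.IsPos r) (i : Fin n) :
    r ≠ -Pi.single i 1 := by
  intro he
  simpa [he] using h.2 i

lemma isPos_single (i : Fin n) : R.IsPos (Pi.single i 1) :=
  ⟨R.simple_mem i, fun j => by by_cases h : j = i <;> simp [h]⟩

lemma negSingle_injective : Injective (fun i : Fin n => (-Pi.single i 1 : Fin n → ℤ)) := by
  intro i j h
  by_contra hij
  simpa [hij] using congrFun h i

lemma IsPos.sref {R : CrysRootDatum n} {r : Fin n → ℤ} (h : R.IsPos r) {i : Fin n}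
    (hne : r ≠ Pi.single i 1) : R.IsPos (R.sref i r) := by
  have hmem : R.sref i r ∈ R.roots := R.reflect_mem i r h.1
  by_cases hsupp : ∃ j, j ≠ i ∧ 0 < r j
  · obtain ⟨j, hji, hj⟩ := hsupp
    refine ⟨hmem, (R.sign_coherent _ hmem).resolve_right fun hneg => ?_⟩
    have := hneg j
    rw [R.sref_apply_of_ne hji] at this
    omega
  · push Not at hsupp
    have hr : r = r i • Pi.single i 1 := by
      ext j
      by_cases hj : j = i
      · subst hj; simp
      · simp [hj, le_antisymm (hsupp j hj) (h.2 j)]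
    rcases R.reduced (r i) i (hr ▸ h.1) with h1 | h1
    · exact absurd (by rw [hr, h1, one_smul]) hne
    · exact absurd (h.2 i) (by omega)

lemma sigmaMap_of_isPos (i : Fin n) {v : Fin n → ℤ} (h : R.IsPos v) :
    R.sigmaMap i v = R.sref i v :=
  if_neg fun ⟨⟨j, hj⟩, _⟩ => h.ne_negSingle j hj

lemma sigmaMap_negSingle_of_ne {i j : Fin n} (hji : j ≠ i) :
    R.sigmaMap i (-Pi.single j 1) = -Pi.single j 1 :=
  if_pos ⟨⟨j, rfl⟩, fun he => hji (negSingle_injective he)⟩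

lemma sigmaMap_negSingle_self (i : Fin n) : R.sigmaMap i (-Pi.single i 1) = Pi.single i 1 := by
  rw [sigmaMap, if_neg fun h => h.2 rfl, sref_neg, sref_single_self, neg_neg]

lemma sigmaMap_mapsTo (i : Fin n) : MapsTo (R.sigmaMap i) R.almostPos R.almostPos := by
  rintro v (hp | ⟨j, rfl⟩)
  · rw [R.sigmaMap_of_isPos i hp]
    by_cases he : v = Pi.single i 1
    · subst he; rw [R.sref_single_self]; exact Or.inr ⟨i, rfl⟩
    · exact Or.inl (hp.sref he)
  · by_cases hji : j = i
    · subst hji; rw [R.sigmaMap_negSingle_self]; exact Or.inl (R.isPos_single j)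
    · rw [R.sigmaMap_negSingle_of_ne hji]; exact Or.inr ⟨j, rfl⟩

lemma sigmaMap_leftInvOn (i : Fin n) : LeftInvOn (R.sigmaMap i) (R.sigmaMap i) R.almostPos := by
  rintro v (hp | ⟨j, rfl⟩)
  · rw [R.sigmaMap_of_isPos i hp]
    by_cases he : v = Pi.single i 1
    · subst he; rw [R.sref_single_self, R.sigmaMap_negSingle_self]
    · rw [R.sigmaMap_of_isPos i (hp.sref he), R.sref_sref]
  · by_cases hji : j = i
    · subst hji
      rw [R.sigmaMap_negSingle_self, R.sigmaMap_of_isPos j (R.isPos_single j), R.sref_single_self]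
    · rw [R.sigmaMap_negSingle_of_ne hji, R.sigmaMap_negSingle_of_ne hji]

variable (l : List (Fin n))

lemma tauCInv_mapsTo : MapsTo (R.tauCInv l) R.almostPos R.almostPos := by
  induction l with
  | nil => exact mapsTo_id _
  | cons i t ih => exact ih.comp (R.sigmaMap_mapsTo i)

lemma tauC_leftInvOn_tauCInv : LeftInvOn (R.tauC l) (R.tauCInv l) R.almostPos := by
  induction l with
  | nil => exact fun _ _ => rfl
  | cons i t ih =>
    intro v hv
    change R.sigmaMap i (R.tauC t (R.tauCInv t (R.sigmaMap i v))) = v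
    rw [ih (R.sigmaMap_mapsTo i hv), R.sigmaMap_leftInvOn i hv]

lemma tauCInv_injOn : InjOn (R.tauCInv l) R.almostPos :=
  (R.tauC_leftInvOn_tauCInv l).injOn

lemma almostPos_finite : R.almostPos.Finite :=
  (R.roots.finite_toSet.union
    (finite_range fun i : Fin n => (-Pi.single i 1 : Fin n → ℤ))).subset
    fun _ hv => hv.imp (fun hp => hp.1) fun ⟨i, hi⟩ => ⟨i, hi.symm⟩

/-- The linear Coxeter element `c⁻¹ = s_{c_n} ⋯ s_{c_1}`. -/
def coxeterInv (v : Fin n → ℤ) : Fin n → ℤ :=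
  l.foldl (fun u i => R.sref i u) v

lemma coxeterInv_add (x y : Fin n → ℤ) :
    R.coxeterInv l (x + y) = R.coxeterInv l x + R.coxeterInv l y := by
  induction l generalizing x y with
  | nil => rfl
  | cons i t ih => exact (congrArg _ (R.sref_add i x y)).trans (ih _ _)

lemma coxeterInv_apply_of_notMem {v : Fin n → ℤ} {j : Fin n} (h : j ∉ l) :
    R.coxeterInv l v j = v j := by
  induction l generalizing v with
  | nil => rfl
  | cons i t ih =>
    rw [List.mem_cons, not_or] at h
    exact (ih h.2).trans (R.sref_apply_of_ne h.1 v)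

lemma tauCInv_negSingle_of_notMem {i : Fin n} (h : i ∉ l) :
    R.tauCInv l (-Pi.single i 1) = -Pi.single i 1 := by
  induction l with
  | nil => rfl
  | cons j t ih =>
    rw [List.mem_cons, not_or] at h
    change R.tauCInv t (R.sigmaMap j _) = _
    rw [R.sigmaMap_negSingle_of_ne h.1, ih h.2]

/-- Once some `s_i` sends the root to `-α_i`, the later `σ_j` fix it since `l` has no repeats. -/
lemma tauCInv_of_isPos (hnd : l.Nodup) {u : Fin n → ℤ} (hu : R.IsPos u) :
    R.tauCInv l u = R.coxeterInv l u ∨ ∃ j, R.tauCInv l u = -Pi.single j 1 := by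
  induction l generalizing u with
  | nil => exact Or.inl rfl
  | cons i t ih =>
    rw [List.nodup_cons] at hnd
    change R.tauCInv t (R.sigmaMap i u) = R.coxeterInv t (R.sref i u) ∨
      ∃ j, R.tauCInv t (R.sigmaMap i u) = _
    rw [R.sigmaMap_of_isPos i hu]
    by_cases he : u = Pi.single i 1
    · subst he
      rw [R.sref_single_self, R.tauCInv_negSingle_of_notMem t hnd.1]
      exact Or.inr ⟨i, rfl⟩
    · exact ih hnd.2 (hu.sref he)

/-- Each `s_i` moves only the `i`-th coordinate, by `-(C v)_i`, and the later reflections, all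
different from `s_i`, leave that coordinate alone. -/
lemma mulVec_eq_zero_of_coxeterInv_eq_self (hnd : l.Nodup) {v : Fin n → ℤ}
    (hfix : R.coxeterInv l v = v) : ∀ i ∈ l, (R.C *ᵥ v) i = 0 := by
  induction l with
  | nil => simp
  | cons i t ih =>
    rw [List.nodup_cons] at hnd
    change R.coxeterInv t (R.sref i v) = v at hfix
    have hcoord : R.sref i v i = v i := by
      rw [← R.coxeterInv_apply_of_notMem t (v := R.sref i v) hnd.1]
      exact congrFun hfix i
    have hi : (R.C *ᵥ v) i = 0 := by
      rw [sref_apply_self] at hcoord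
      omega
    have hsref : R.sref i v = v := by rw [sref_eq, hi, zero_smul, sub_zero]
    rw [hsref] at hfix
    intro j hj
    rcases List.mem_cons.1 hj with rfl | hjt
    · exact hi
    · exact ih hnd.2 hfix j hjt

section CartanKernel

variable {d : Fin n → ℤ}

def cartanForm (d x y : Fin n → ℤ) : ℤ := ∑ i, d i * x i * (R.C *ᵥ y) i

lemma sum_mul_cartan_eq (hsym : ∀ i j, d i * R.C i j = d j * R.C j i) (x : Fin n → ℤ)
    (k : Fin n) :
    ∑ i, d i * x i * R.C i k = d k * (R.C *ᵥ x) k := by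
  simp only [mulVec, dotProduct, Finset.mul_sum]
  exact Finset.sum_congr rfl fun i _ => by linear_combination x i * hsym i k

lemma cartanForm_comm (hsym : ∀ i j, d i * R.C i j = d j * R.C j i) (x y : Fin n → ℤ) :
    R.cartanForm d x y = R.cartanForm d y x := by
  simp only [cartanForm, mulVec, dotProduct, Finset.mul_sum]
  rw [Finset.sum_comm]
  exact Finset.sum_congr rfl fun i _ => Finset.sum_congr rfl fun j _ => by
    linear_combination (x j * y i) * hsym j i

lemma cartanForm_sref_self (hsym : ∀ i j, d i * R.C i j = d j * R.C j i) (k : Fin n)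
    (x : Fin n → ℤ) : R.cartanForm d (R.sref k x) (R.sref k x) = R.cartanForm d x x := by
  set a := (R.C *ᵥ x) k
  have hterm : ∀ i, d i * R.sref k x i * (R.C *ᵥ R.sref k x) i =
      d i * x i * (R.C *ᵥ x) i - a * (d i * x i * R.C i k) -
        if i = k then a * d k * (a - a * R.C k k) else 0 := by
    intro i
    rw [mulVec_sref]
    by_cases hik : i = k
    · subst hik; simp only [sref_apply_self, if_pos]; ring
    · rw [sref_apply_of_ne _ hik, if_neg hik]; ring
  simp only [cartanForm, hterm, Finset.sum_sub_distrib, ← Finset.mul_sum,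
    R.sum_mul_cartan_eq hsym, Finset.sum_ite_eq', Finset.mem_univ, if_true, R.diag]
  ring

lemma cartanForm_single_self (i : Fin n) :
    R.cartanForm d (Pi.single i 1) (Pi.single i 1) = 2 * d i := by
  simp [cartanForm, Pi.single_apply, R.diag, mul_comm]

variable {v : Fin n → ℤ}

lemma cartan_eq_zero_of_mulVec_eq_zero (hv : R.C *ᵥ v = 0) (hnn : 0 ≤ v) {i j : Fin n}
    (hi : v i = 0) (hj : 0 < v j) : R.C i j = 0 := by
  have hterm : ∀ k ∈ Finset.univ, R.C i k * v k ≤ 0 := by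
    intro k _
    by_cases hk : k = i
    · simp [hk, hi]
    · exact mul_nonpos_of_nonpos_of_nonneg (R.offdiag i k (Ne.symm hk)) (hnn k)
  have hvi : ∑ k, R.C i k * v k = 0 := congrFun hv i
  have := (Finset.sum_eq_zero_iff_of_nonpos hterm).1 hvi j (Finset.mem_univ j)
  exact (mul_eq_zero.1 this).resolve_right hj.ne'

/-- Since `(v, r) = 0`, if `C r` were nonnegative on the support of `v` it would vanish there,
and also off it, because `C` decouples the support of `v` from its complement. -/
lemma exists_mulVec_neg_of_cartanForm_ne_zero (hd : ∀ i, 0 < d i)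
    (hsym : ∀ i j, d i * R.C i j = d j * R.C j i) (hv : R.C *ᵥ v = 0) (hnn : 0 ≤ v)
    {r : Fin n → ℤ} (hsupp : ∀ i, v i = 0 → r i = 0) (hr : R.cartanForm d r r ≠ 0) :
    ∃ k, 0 < v k ∧ (R.C *ᵥ r) k < 0 := by
  by_contra! hcon
  have hvr : R.cartanForm d v r = 0 := by
    rw [R.cartanForm_comm hsym]
    simp [cartanForm, hv]
  have hon : ∀ i, 0 < v i → (R.C *ᵥ r) i = 0 := by
    have hterm : ∀ i ∈ Finset.univ, 0 ≤ d i * v i * (R.C *ᵥ r) i := fun i _ => by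
      rcases (hnn i).lt_or_eq with hi | hi
      · exact mul_nonneg (mul_nonneg (hd i).le hi.le) (hcon i hi)
      · simp [← hi]
    intro i hi
    have := (Finset.sum_eq_zero_iff_of_nonneg hterm).1 hvr i (Finset.mem_univ i)
    simpa [(hd i).ne', hi.ne'] using this
  have hoff : ∀ i, v i = 0 → (R.C *ᵥ r) i = 0 := by
    intro i hi
    refine (Finset.sum_eq_zero fun j _ => ?_ : ∑ j, R.C i j * r j = 0)
    rcases (hnn j).lt_or_eq with hj | hj
    · simp [R.cartan_eq_zero_of_mulVec_eq_zero hv hnn hi hj]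
    · simp [hsupp j hj.symm]
  have hCr : ∀ i, (R.C *ᵥ r) i = 0 := fun i =>
    (hnn i).lt_or_eq.elim (hon i) fun h => hoff i h.symm
  exact hr (by simp [cartanForm, hCr])

/-- Otherwise reflections `s_k` with `v_k > 0` and `(C r)_k < 0`, starting from `α_i` with
`v_i > 0`, raise the height of a root forever; the invariant `(r, r) = 2 d_i` keeps `C r ≠ 0`. -/
theorem eq_zero_of_nonneg_of_mulVec_eq_zero (hnn : 0 ≤ v) (hv : R.C *ᵥ v = 0) : v = 0 := by
  obtain ⟨d, hd, hsym⟩ := R.symmetrizable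
  by_contra hne
  obtain ⟨i₀, hi₀⟩ : ∃ i, 0 < v i := by
    by_contra! h
    exact hne (le_antisymm h hnn)
  classical
  let S := R.roots.filter fun r => (∀ i, v i = 0 → r i = 0) ∧ R.cartanForm d r r ≠ 0
  have hsingle : Pi.single i₀ 1 ∈ S := by
    refine Finset.mem_filter.2 ⟨R.simple_mem i₀, fun i hi => ?_, ?_⟩
    · have : i ≠ i₀ := by rintro rfl; omega
      simp [this]
    · rw [cartanForm_single_self]
      have := hd i₀
      omega
  obtain ⟨r, hrS, hmax⟩ := S.exists_max_image (fun r => ∑ i, r i) ⟨_, hsingle⟩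
  obtain ⟨hroot, hsupp, hform⟩ := Finset.mem_filter.1 hrS
  obtain ⟨k, hvk, hk⟩ := R.exists_mulVec_neg_of_cartanForm_ne_zero hd hsym hv hnn hsupp hform
  have hkS : R.sref k r ∈ S := by
    refine Finset.mem_filter.2 ⟨R.reflect_mem k r hroot, fun i hi => ?_, ?_⟩
    · have : i ≠ k := by rintro rfl; omega
      rw [R.sref_apply_of_ne this]
      exact hsupp i hi
    · rwa [R.cartanForm_sref_self hsym]
  have := hmax _ hkS
  rw [sum_sref] at this
  omega

end CartanKernel

/-- If the `τ_c⁻¹`-orbit of `γ` avoided `-Δ`, then `τ_c⁻¹` would act on it as the linear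
`c⁻¹`, and the sum over one period of this (finite, hence periodic) orbit would be a nonzero
nonnegative `c⁻¹`-fixed vector, that is, a null vector of `C`. -/
lemma exists_tauCInv_iterate_eq_negSingle (hnd : l.Nodup) (hall : ∀ i, i ∈ l)
    {γ : Fin n → ℤ} (hγ : γ ∈ R.almostPos) :
    ∃ m i, (R.tauCInv l)^[m] γ = -Pi.single i 1 := by
  by_contra! hcon
  set f := R.tauCInv l
  have hpos : ∀ m, R.IsPos (f^[m] γ) := fun m =>
    ((R.tauCInv_mapsTo l).iterate m hγ).resolve_right fun ⟨i, hi⟩ => hcon m i hi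
  have hstep : ∀ m, f^[m + 1] γ = R.coxeterInv l (f^[m] γ) := fun m => by
    rw [iterate_succ_apply']
    refine (R.tauCInv_of_isPos l hnd (hpos m)).resolve_right fun ⟨i, hi⟩ => hcon (m + 1) i ?_
    rwa [iterate_succ_apply']
  obtain ⟨k, hk, hper⟩ := mem_periodicPts.1 <|
    (R.tauCInv_injOn l).mem_periodicPts (R.tauCInv_mapsTo l) R.almostPos_finite hγ
  set v := ∑ j ∈ Finset.range k, f^[j] γ
  have hfix : R.coxeterInv l v = v :=
    calc R.coxeterInv l v = ∑ j ∈ Finset.range k, R.coxeterInv l (f^[j] γ) :=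
          map_sum (AddMonoidHom.mk' (R.coxeterInv l) (R.coxeterInv_add l)) _ _
      _ = ∑ j ∈ Finset.range k, f^[j + 1] γ := by simp only [hstep]
      _ = v := Finset.sum_range_succ_eq_of_eq (fun j => f^[j] γ) hper
  have hnn : ∀ j, 0 ≤ f^[j] γ := fun j i => (hpos j).2 i
  have hv : v = 0 := R.eq_zero_of_nonneg_of_mulVec_eq_zero (Finset.sum_nonneg fun j _ => hnn j)
    (funext fun i => R.mulVec_eq_zero_of_coxeterInv_eq_self l hnd hfix i (hall i))
  have hγv : γ ≤ v := Finset.single_le_sum (f := fun j => f^[j] γ) (fun j _ => hnn j)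
    (Finset.mem_range.2 hk)
  exact (hpos 0).ne_zero (le_antisymm (hv ▸ hγv) (hnn 0))

lemma tauCInv_iterate_Rdepth (hnd : l.Nodup) (hall : ∀ i, i ∈ l) {γ : Fin n → ℤ}
    (hγ : γ ∈ R.almostPos) : ∃ i, (R.tauCInv l)^[R.Rdepth l γ] γ = -Pi.single i 1 :=
  Nat.sInf_mem (R.exists_tauCInv_iterate_eq_negSingle l hnd hall hγ)

lemma compat_tauCInv_iterate {M : Type*} {compat : (Fin n → ℤ) → (Fin n → ℤ) → M}
    (h2 : ∀ α β, α ∈ R.almostPos → β ∈ R.almostPos →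
      compat (R.tauC l α) (R.tauC l β) = compat α β)
    (k : ℕ) {x y : Fin n → ℤ} (hx : x ∈ R.almostPos) (hy : y ∈ R.almostPos) :
    compat ((R.tauCInv l)^[k] x) ((R.tauCInv l)^[k] y) = compat x y := by
  induction k generalizing x y with
  | zero => rfl
  | succ k ih =>
    have hx' := R.tauCInv_mapsTo l hx
    have hy' := R.tauCInv_mapsTo l hy
    rw [iterate_succ_apply, iterate_succ_apply, ih hx' hy', ← h2 _ _ hx' hy',
      R.tauC_leftInvOn_tauCInv l hx, R.tauC_leftInvOn_tauCInv l hy]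

end CrysRootDatum

theorem exchanged_roots_have_distinct_depth_general {n : ℕ} (R : CrysRootDatum n)
    (l : List (Fin n)) (hnd : l.Nodup) (hall : ∀ i, i ∈ l)
    (compat : (Fin n → ℤ) → (Fin n → ℤ) → ℕ)
    (h1 : ∀ (i : Fin n) (β : Fin n → ℤ), β ∈ R.almostPos →
      compat (-(Pi.single i 1 : Fin n → ℤ)) β = (β i).toNat)
    (h2 : ∀ α β, α ∈ R.almostPos → β ∈ R.almostPos →
      compat (R.tauC l α) (R.tauC l β) = compat α β)
    (IsCluster : Finset (Fin n → ℤ) → Prop)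
    (hcluster : ∀ s, IsCluster s ↔
      (↑s ⊆ R.almostPos ∧
       (∀ α ∈ s, ∀ β ∈ s, α ≠ β → compat α β = 0 ∧ compat β α = 0) ∧
       (∀ γ ∈ R.almostPos, (∀ α ∈ s, α ≠ γ → compat α γ = 0 ∧ compat γ α = 0) → γ ∈ s)))
    (C' : Finset (Fin n → ℤ)) (α β : Fin n → ℤ) (hne : α ≠ β)
    (hβ : β ∉ C')
    (hCα : IsCluster (insert α C')) (hCβ : IsCluster (insert β C')) :
    R.Rdepth l α ≠ R.Rdepth l β := by
  obtain ⟨hsubα, -, hmaxα⟩ := (hcluster _).1 hCα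
  obtain ⟨hsubβ, hpairβ, -⟩ := (hcluster _).1 hCβ
  have hαA : α ∈ R.almostPos := hsubα (Finset.mem_insert_self α C')
  have hβA : β ∈ R.almostPos := hsubβ (Finset.mem_insert_self β C')
  intro hdepth
  obtain ⟨i, hi⟩ := R.tauCInv_iterate_Rdepth l hnd hall hαA
  obtain ⟨j, hj⟩ := R.tauCInv_iterate_Rdepth l hnd hall hβA
  rw [← hdepth] at hj
  have hij : i ≠ j := by
    rintro rfl
    exact hne ((R.tauCInv_injOn l).iterate (R.tauCInv_mapsTo l) _ hαA hβA (hi.trans hj.symm))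
  have hcompat : compat α β = 0 ∧ compat β α = 0 := by
    rw [← R.compat_tauCInv_iterate l h2 _ hαA hβA,
      ← R.compat_tauCInv_iterate l h2 _ hβA hαA,
      hi, hj, h1 _ _ (Or.inr ⟨j, rfl⟩), h1 _ _ (Or.inr ⟨i, rfl⟩)]
    simp [hij, hij.symm]
  have hβα : β ∈ insert α C' := hmaxα β hβA fun δ hδ hδβ => by
    rcases Finset.mem_insert.1 hδ with rfl | hδC
    · exact hcompat
    · exact hpairβ δ (Finset.mem_insert_of_mem hδC) β (Finset.mem_insert_self β C') hδβ
  exact (Finset.mem_insert.1 hβα).elim (fun h => hne h.symm) hβ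

/-- Two almost positive roots exchanged between two `c`-clusters sharing the rest of
their elements cannot have equal `τ_c`-depth: if `C' ∪ {α}` and `C' ∪ {β}` are both
`c`-clusters with `α ≠ β`, then `R_c(α) ≠ R_c(β)`.  Here `compat` is the
`c`-compatibility degree (the unique function satisfying the two characterizing
properties, taken as hypotheses `h1`, `h2`), a `c`-cluster is a maximal pairwise
`c`-compatible subset of `Φ_{≥-1}`, and every `c`-cluster has cardinality `n`
(hypothesis `hcard`). -/
theorem exchanged_roots_have_distinct_depth {n : ℕ} (R : CrysRootDatum n)
    (l : List (Fin n)) (hnd : l.Nodup) (hall : ∀ i, i ∈ l)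
    (compat : (Fin n → ℤ) → (Fin n → ℤ) → ℕ)
    (h1 : ∀ (i : Fin n) (β : Fin n → ℤ), β ∈ R.almostPos →
      compat (-(Pi.single i 1 : Fin n → ℤ)) β = (β i).toNat)
    (h2 : ∀ α β, α ∈ R.almostPos → β ∈ R.almostPos →
      compat (R.tauC l α) (R.tauC l β) = compat α β)
    (IsCluster : Finset (Fin n → ℤ) → Prop)
    (hcluster : ∀ s, IsCluster s ↔
      (↑s ⊆ R.almostPos ∧
       (∀ α ∈ s, ∀ β ∈ s, α ≠ β → compat α β = 0 ∧ compat β α = 0) ∧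
       (∀ γ ∈ R.almostPos, (∀ α ∈ s, α ≠ γ → compat α γ = 0 ∧ compat γ α = 0) → γ ∈ s)))
    (hcard : ∀ s, IsCluster s → s.card = n)
    (C' : Finset (Fin n → ℤ)) (α β : Fin n → ℤ) (hne : α ≠ β)
    (hα : α ∉ C') (hβ : β ∉ C')
    (hCα : IsCluster (insert α C')) (hCβ : IsCluster (insert β C')) :
    R.Rdepth l α ≠ R.Rdepth l β :=
  exchanged_roots_have_distinct_depth_general R l hnd hall compat h1 h2 IsCluster hcluster C' α β
    hne hβ hCα hCβ
end

section
/- The duality formula for c-matrices under one Coxeter-twist: for a cluster algebra A(B^c; t_0) with trivial coefficients, any cluster variable x and non-labeled cluster [x] containing x, the c-vector satisfies c^{B^c;t_0}_{τ_c^{-1}(x), τ_c^{-1}([x])} = -c^{-B^c;t_0}_{x,[x]}, where τ_c^{-1} acts on clusters via the mutation sequence μ ∘ μ_{c_1} ∘ ⋯ ∘ μ_{c_n} when [x] = μ(x_{t_0}). -/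
/-- Mutation in direction `k` of an extended integer matrix (rows `Fin n ⊕ Fin n`:
exchange-matrix block on top and `C`-matrix block below). -/
def extMut {n : ℕ} (A : Matrix (Fin n ⊕ Fin n) (Fin n) ℤ) (k : Fin n) :
    Matrix (Fin n ⊕ Fin n) (Fin n) ℤ :=
  fun i j => if i = Sum.inl k ∨ j = k then -A i j
    else A i j + max (A i k) 0 * A (Sum.inl k) j + A i k * max (-A (Sum.inl k) j) 0

/-- The extended matrix `[B; I_n]`. -/
def extOf {n : ℕ} (B : Matrix (Fin n) (Fin n) ℤ) : Matrix (Fin n ⊕ Fin n) (Fin n) ℤ :=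
  fun i j => Sum.elim (fun r => B r j) (fun r => if r = j then 1 else 0) i

/-- The skew-symmetrizable matrix `B^c` attached to a Cartan matrix `C` and a Coxeter
element `c = c_1 ⋯ c_n` with `c_k = s_{w k}`. -/
def Bc {n : ℕ} (C : Matrix (Fin n) (Fin n) ℤ) (w : Equiv.Perm (Fin n)) :
    Matrix (Fin n) (Fin n) ℤ :=
  fun i j => if i = j then 0 else if w.symm j < w.symm i then C i j else -C i j

/-- The extended matrix obtained from `[B^c; I_n]` by applying the full Coxeter
mutation sequence `μ_{c_1} ∘ ⋯ ∘ μ_{c_n}` (rightmost applied first); by Proposition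
on the interpretation of `τ_c`, mutating further along `μ` computes the labeled seed
of `τ_c⁻¹` of the cluster reached by `μ`. -/
def coxTwisted {n : ℕ} (C : Matrix (Fin n) (Fin n) ℤ) (w : Equiv.Perm (Fin n)) :
    Matrix (Fin n ⊕ Fin n) (Fin n) ℤ :=
  (List.ofFn fun k : Fin n => w k).foldr (fun idx A => extMut A idx) (extOf (Bc C w))

/-!
Let `signedExtOf B ε = [D B D; D]` with `D = diag ε` a sign matrix. Mutating it at a vertex `k`
with `ε k = 1` and `ε j B_kj ≤ 0 ≤ ε i B_ik` for all `i, j` only flips the sign `ε k`.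
Along the Coxeter sequence every mutated vertex satisfies this for the current signs, because
`B^c` orients the edge between `i` and `j` according to their order in `c`. Hence the sequence
takes `[B^c; I]` to `[B^c; -I] = -[-B^c; I]`, and since mutation commutes with negation, the
two patterns stay opposite along any further mutation sequence.
-/

lemma extMut_neg {n : ℕ} (A : Matrix (Fin n ⊕ Fin n) (Fin n) ℤ) (k : Fin n) :
    extMut (-A) k = -extMut A k := by
  funext i j
  simp only [extMut, Matrix.neg_apply, neg_neg]
  split_ifs
  · exact (neg_neg _).symm
  · linear_combination A (Sum.inl k) j * max_zero_sub_max_neg_zero_eq_self (A i k)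
      - A i k * max_zero_sub_max_neg_zero_eq_self (A (Sum.inl k) j)

lemma foldl_extMut_neg {n : ℕ} (l : List (Fin n)) (A : Matrix (Fin n ⊕ Fin n) (Fin n) ℤ) :
    l.foldl extMut (-A) = -l.foldl extMut A := by
  induction l generalizing A with
  | nil => rfl
  | cons k l ih => simp only [List.foldl_cons, extMut_neg, ih]

def signedExtOf {n : ℕ} (B : Matrix (Fin n) (Fin n) ℤ) (ε : Fin n → ℤ) :
    Matrix (Fin n ⊕ Fin n) (Fin n) ℤ :=
  fun i j => Sum.elim (fun r => ε r * ε j * B r j) (fun r => if r = j then ε j else 0) i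

lemma signedExtOf_one {n : ℕ} (B : Matrix (Fin n) (Fin n) ℤ) :
    signedExtOf B 1 = extOf B := by
  funext i j
  rcases i with r | r <;> simp [signedExtOf, extOf]

lemma signedExtOf_neg_one {n : ℕ} (B : Matrix (Fin n) (Fin n) ℤ) :
    signedExtOf B (-1) = -extOf (-B) := by
  funext i j
  rcases i with r | r <;> simp [signedExtOf, extOf, apply_ite Neg.neg]

lemma max_zero_mul_add_mul_max_neg_zero_eq_zero {a b : ℤ} (ha : 0 ≤ a) (hb : b ≤ 0) :
    max a 0 * b + a * max (-b) 0 = 0 := by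
  rw [max_eq_left ha, max_eq_left (neg_nonneg.mpr hb)]
  ring

lemma extMut_signedExtOf {n : ℕ} {B : Matrix (Fin n) (Fin n) ℤ} {ε : Fin n → ℤ} {k : Fin n}
    (hk : ε k = 1) (hrow : ∀ j, ε j * B k j ≤ 0) (hcol : ∀ i, 0 ≤ ε i * B i k) :
    extMut (signedExtOf B ε) k = signedExtOf B (Function.update ε k (-1)) := by
  have hkk : B k k = 0 := by
    have h₁ := hrow k
    have h₂ := hcol k
    rw [hk, one_mul] at h₁ h₂
    omega
  funext i j
  rcases i with i | s
  · by_cases hi : i = k <;> by_cases hj : j = k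
    · subst hi hj
      simp [extMut, signedExtOf, hkk]
    · subst hi
      simp [extMut, signedExtOf, hk, hj]
    · subst hj
      simp [extMut, signedExtOf, hk, hi]
    · simp only [extMut, signedExtOf, Sum.elim_inl, Sum.inl.injEq, hi, hj, false_or, if_false,
        Function.update_of_ne hi, Function.update_of_ne hj, hk, mul_one, one_mul]
      linear_combination max_zero_mul_add_mul_max_neg_zero_eq_zero (hcol i) (hrow j)
  · by_cases hj : j = k
    · subst hj
      by_cases hs : s = j <;> simp [extMut, signedExtOf, hk, hs]
    · by_cases hs : s = k
      · subst hs
        simp only [extMut, signedExtOf, Sum.elim_inr, Sum.elim_inl, reduceCtorEq, hj, or_self,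
          if_false, if_true, Ne.symm hj, hk, one_mul, Function.update_of_ne hj]
        linear_combination max_zero_mul_add_mul_max_neg_zero_eq_zero zero_le_one (hrow j)
      · simp [extMut, signedExtOf, hj, hs]

/-- The signs after the mutations at `w (n-1), …, w m` of the Coxeter sequence. -/
def coxSign {n : ℕ} (w : Equiv.Perm (Fin n)) (m : ℕ) (j : Fin n) : ℤ :=
  if m ≤ w.symm j then -1 else 1

lemma coe_symm_ne_of_ne {n : ℕ} (w : Equiv.Perm (Fin n)) {m : ℕ} (hm : m < n) {j : Fin n}
    (hj : j ≠ w ⟨m, hm⟩) : (w.symm j : ℕ) ≠ m :=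
  fun h => hj ((Equiv.symm_apply_eq w).mp (Fin.ext h))

lemma coxSign_self {n : ℕ} (w : Equiv.Perm (Fin n)) : coxSign w n = 1 := by
  funext j
  simp [coxSign, (w.symm j).isLt]

lemma coxSign_zero {n : ℕ} (w : Equiv.Perm (Fin n)) : coxSign w 0 = -1 := by
  funext j
  simp [coxSign]

lemma coxSign_succ_apply {n : ℕ} (w : Equiv.Perm (Fin n)) {m : ℕ} (hm : m < n) :
    coxSign w (m + 1) (w ⟨m, hm⟩) = 1 := by
  simp [coxSign]

lemma update_coxSign_succ {n : ℕ} (w : Equiv.Perm (Fin n)) {m : ℕ} (hm : m < n) :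
    Function.update (coxSign w (m + 1)) (w ⟨m, hm⟩) (-1) = coxSign w m := by
  funext j
  by_cases hj : j = w ⟨m, hm⟩
  · subst hj
    simp [coxSign]
  · have : (w.symm j : ℕ) ≠ m := coe_symm_ne_of_ne w hm hj
    simp only [Function.update_of_ne hj, coxSign]
    split_ifs <;> omega

lemma coxSign_succ_mul_Bc_row {n : ℕ} (C : Matrix (Fin n) (Fin n) ℤ) (w : Equiv.Perm (Fin n))
    {m : ℕ} (hm : m < n) {j : Fin n} (hj : j ≠ w ⟨m, hm⟩) :
    coxSign w (m + 1) j * Bc C w (w ⟨m, hm⟩) j = C (w ⟨m, hm⟩) j := by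
  have : (w.symm j : ℕ) ≠ m := coe_symm_ne_of_ne w hm hj
  simp only [coxSign, Bc, Ne.symm hj, if_false, Equiv.symm_apply_apply, Fin.lt_def]
  split_ifs <;> omega

lemma coxSign_succ_mul_Bc_col {n : ℕ} (C : Matrix (Fin n) (Fin n) ℤ) (w : Equiv.Perm (Fin n))
    {m : ℕ} (hm : m < n) {i : Fin n} (hi : i ≠ w ⟨m, hm⟩) :
    coxSign w (m + 1) i * Bc C w i (w ⟨m, hm⟩) = -C i (w ⟨m, hm⟩) := by
  have : (w.symm i : ℕ) ≠ m := coe_symm_ne_of_ne w hm hi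
  simp only [coxSign, Bc, hi, if_false, Equiv.symm_apply_apply, Fin.lt_def]
  split_ifs <;> omega

lemma Bc_self {n : ℕ} (C : Matrix (Fin n) (Fin n) ℤ) (w : Equiv.Perm (Fin n)) (i : Fin n) :
    Bc C w i i = 0 := by
  simp [Bc]

lemma extMut_signedExtOf_Bc_coxSign {n : ℕ} (C : Matrix (Fin n) (Fin n) ℤ)
    (hoff : ∀ i j, i ≠ j → C i j ≤ 0) (w : Equiv.Perm (Fin n)) {m : ℕ} (hm : m < n) :
    extMut (signedExtOf (Bc C w) (coxSign w (m + 1))) (w ⟨m, hm⟩)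
      = signedExtOf (Bc C w) (coxSign w m) := by
  rw [extMut_signedExtOf (coxSign_succ_apply w hm), update_coxSign_succ]
  · intro j
    by_cases hj : j = w ⟨m, hm⟩
    · simp [hj, Bc_self]
    · rw [coxSign_succ_mul_Bc_row C w hm hj]
      exact hoff _ _ (Ne.symm hj)
  · intro i
    by_cases hi : i = w ⟨m, hm⟩
    · simp [hi, Bc_self]
    · rw [coxSign_succ_mul_Bc_col C w hm hi, neg_nonneg]
      exact hoff _ _ hi

lemma foldr_extMut_drop_coxSeq {n : ℕ} (C : Matrix (Fin n) (Fin n) ℤ)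
    (hoff : ∀ i j, i ≠ j → C i j ≤ 0) (w : Equiv.Perm (Fin n)) {m : ℕ} (hm : m ≤ n) :
    ((List.ofFn fun k : Fin n => w k).drop m).foldr (fun k A => extMut A k) (extOf (Bc C w))
      = signedExtOf (Bc C w) (coxSign w m) := by
  induction hm using Nat.decreasingInduction with
  | self =>
    rw [List.drop_of_length_le (by simp), List.foldr_nil, coxSign_self, signedExtOf_one]
  | of_succ m hm ih =>
    rw [List.drop_eq_getElem_cons (by simpa using hm), List.foldr_cons, ih, List.getElem_ofFn]
    exact extMut_signedExtOf_Bc_coxSign C hoff w hm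

lemma coxTwisted_eq_neg_extOf_neg {n : ℕ} (C : Matrix (Fin n) (Fin n) ℤ)
    (hoff : ∀ i j, i ≠ j → C i j ≤ 0) (w : Equiv.Perm (Fin n)) :
    coxTwisted C w = -extOf (-Bc C w) := by
  have h := foldr_extMut_drop_coxSeq C hoff w (Nat.zero_le n)
  rwa [List.drop_zero, coxSign_zero, signedExtOf_neg_one] at h

theorem cVector_coxeter_twist_duality_general {n : ℕ}
    (C : Matrix (Fin n) (Fin n) ℤ)
    (hoff : ∀ i j, i ≠ j → C i j ≤ 0)
    (w : Equiv.Perm (Fin n)) (l : List (Fin n)) (j : Fin n) (r : Fin n) :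
    (l.foldl extMut (coxTwisted C w)) (Sum.inr r) j
      = -((l.foldl extMut (extOf (-(Bc C w)))) (Sum.inr r) j) := by
  rw [coxTwisted_eq_neg_extOf_neg C hoff w, foldl_extMut_neg, Matrix.neg_apply]

/-- The duality formula for `c`-vectors under one Coxeter twist: with trivial
coefficients, for any mutation sequence `μ` (a list `l`, applied left to right)
and any position `j`, the `c`-vector of the labeled cluster `τ_c⁻¹(μ(x_{t_0}))`
in the pattern `A(B^c; t_0)` — computed by mutating `[B^c; I_n]` first along the
Coxeter sequence `μ_{c_1} ∘ ⋯ ∘ μ_{c_n}` and then along `l` — is the negative of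
the `c`-vector at the same position of the cluster `μ(x_{t_0})` in the pattern
`A(-B^c; t_0)`:  `c^{B^c;t_0}_{τ_c⁻¹(x), τ_c⁻¹([x])} = - c^{-B^c;t_0}_{x,[x]}`. -/
theorem cVector_coxeter_twist_duality {n : ℕ}
    (C : Matrix (Fin n) (Fin n) ℤ)
    (hdiag : ∀ i, C i i = 2)
    (hoff : ∀ i j, i ≠ j → C i j ≤ 0)
    (hzero : ∀ i j, C i j = 0 ↔ C j i = 0)
    (hsym : ∃ d : Fin n → ℤ, (∀ i, 0 < d i) ∧ ∀ i j, d i * C i j = d j * C j i)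
    (w : Equiv.Perm (Fin n)) (l : List (Fin n)) (j : Fin n) (r : Fin n) :
    (l.foldl extMut (coxTwisted C w)) (Sum.inr r) j
      = -((l.foldl extMut (extOf (-(Bc C w)))) (Sum.inr r) j) :=
  cVector_coxeter_twist_duality_general C hoff w l j r
end
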